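/- arXiv:0808.4022 — 4 statements merged into one kernel-verified Lean document; each statement's English description precedes it below -/
import Mathlib

section
/- For every nontrivial connected simple graph G = (V,E), the minimum cardinality of a subset of V∪E that dominates E equals the edge domination number γ'(G), i.e., γ_{V∪E,E}(G) = γ'(G). -/
/-- Two elements (vertices or edges) of a graph are *associated* if they are
adjacent or incident. -/
def elemAssoc {V : Type*} (G : SimpleGraph V) : V ⊕ Sym2 V → V ⊕ Sym2 V → Prop
  | .inl u, .inl v => G.Adj u v
  | .inl u, .inr e => u ∈ e
  | .inr e, .inl u => u ∈ e
  | .inr e, .inr f => e ≠ f ∧ ∃ u, u ∈ e ∧ u ∈ f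

/-- The set of vertex-elements. -/
def vertElems (V : Type*) : Set (V ⊕ Sym2 V) := Set.range Sum.inl

/-- The set of edge-elements of `G`. -/
def edgeElems {V : Type*} (G : SimpleGraph V) : Set (V ⊕ Sym2 V) :=
  Sum.inr '' G.edgeSet

/-- `A` dominates `W`: every element of `W \ (A ∩ W)` is associated to an element of `A`. -/
def Dominates {V : Type*} (G : SimpleGraph V) (A W : Set (V ⊕ Sym2 V)) : Prop :=
  ∀ w ∈ W, w ∉ A → ∃ a ∈ A, elemAssoc G a w

/-- `γ_{U,W}(G)`: minimum cardinality of a subset `A ⊆ U` dominating `W`. -/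
noncomputable def gammaUW {V : Type*} (G : SimpleGraph V)
    (U W : Set (V ⊕ Sym2 V)) : ℕ :=
  sInf {n | ∃ A ⊆ U, Dominates G A W ∧ A.ncard = n}

theorem stmt1 {V : Type*} [Fintype V] (G : SimpleGraph V)
    (hconn : G.Connected) (hnt : Nontrivial V) :
    gammaUW G (vertElems V ∪ edgeElems G) (edgeElems G)
      = gammaUW G (edgeElems G) (edgeElems G) := by
  classical
  have htriv : Dominates G (edgeElems G) (edgeElems G) := by
    intro w hw hw'; exact absurd hw hw'
  have hadj : ∀ v : V, ∃ w, G.Adj v w := by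
    intro v
    obtain ⟨w, hw⟩ := exists_ne v
    obtain ⟨p⟩ := hconn v w
    cases p with
    | nil => exact absurd rfl hw
    | cons h _ => exact ⟨_, h⟩
  apply le_antisymm
  · obtain ⟨B, hBsub, hBdom, hBcard⟩ :=
      Nat.sInf_mem (⟨(edgeElems G).ncard, edgeElems G, le_refl _, htriv, rfl⟩ :
        {n | ∃ A ⊆ edgeElems G, Dominates G A (edgeElems G) ∧ A.ncard = n}.Nonempty)
    exact Nat.sInf_le ⟨B, hBsub.trans Set.subset_union_right, hBdom, hBcard⟩
  · have hne : {n | ∃ A ⊆ vertElems V ∪ edgeElems G,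
        Dominates G A (edgeElems G) ∧ A.ncard = n}.Nonempty :=
      ⟨_, edgeElems G, Set.subset_union_right, htriv, rfl⟩
    obtain ⟨A, hAU, hAdom, hAcard⟩ := Nat.sInf_mem hne
    set f : V → V := fun v => (hadj v).choose with hf
    have hfadj : ∀ v, G.Adj v (f v) := fun v => (hadj v).choose_spec
    set g : V ⊕ Sym2 V → V ⊕ Sym2 V := fun a =>
      match a with
      | .inl v => .inr s(v, f v)
      | .inr e => .inr e with hg
    set A' := g '' A with hA'
    have hA'sub : A' ⊆ edgeElems G := by
      rintro _ ⟨a, ha, rfl⟩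
      cases a with
      | inl v => exact ⟨s(v, f v), hfadj v, rfl⟩
      | inr e =>
        rcases hAU ha with h | h
        · obtain ⟨u, hu⟩ := h; cases hu
        · obtain ⟨e2, he2, heq⟩ := h
          injection heq with heq2
          subst heq2
          exact ⟨e2, he2, rfl⟩
    have hA'dom : Dominates G A' (edgeElems G) := by
      rintro w hw hw'
      obtain ⟨e, heE, rfl⟩ := hw
      by_cases hwA : (Sum.inr e : V ⊕ Sym2 V) ∈ A
      · exact absurd ⟨_, hwA, rfl⟩ hw'
      obtain ⟨a, haA, hassoc⟩ := hAdom _ ⟨e, heE, rfl⟩ hwA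
      cases a with
      | inl v =>
        have hv : v ∈ e := hassoc
        refine ⟨.inr s(v, f v), ⟨_, haA, rfl⟩, ?_⟩
        constructor
        · rintro rfl; exact hw' ⟨_, haA, rfl⟩
        · exact ⟨v, Sym2.mem_mk_left _ _, hv⟩
      | inr e' => exact ⟨.inr e', ⟨_, haA, rfl⟩, hassoc⟩
    have hcard : A'.ncard ≤ A.ncard := Set.ncard_image_le (Set.toFinite A)
    calc sInf {n | ∃ A ⊆ edgeElems G, Dominates G A (edgeElems G) ∧ A.ncard = n}
        ≤ A'.ncard := Nat.sInf_le ⟨A', hA'sub, hA'dom, rfl⟩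
      _ ≤ A.ncard := hcard
      _ = _ := hAcard
end

section
/- For every nontrivial connected simple graph G, γ''(G) ≥ γ'(G). -/
theorem stmt10 {V : Type*} [Fintype V] (G : SimpleGraph V)
    (hconn : G.Connected) (hnt : Nontrivial V) :
    gammaUW G (vertElems V ∪ edgeElems G) (vertElems V ∪ edgeElems G)
      ≥ gammaUW G (edgeElems G) (edgeElems G) := by
  classical
  -- every vertex has a neighbor
  have hnbr : ∀ v : V, ∃ w, G.Adj v w := by
    intro v
    obtain ⟨u, hu⟩ := exists_ne v
    obtain ⟨p⟩ := hconn v u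
    cases p with
    | nil => exact absurd rfl hu
    | cons h _ => exact ⟨_, h⟩
  set S := {n | ∃ A ⊆ vertElems V ∪ edgeElems G,
      Dominates G A (vertElems V ∪ edgeElems G) ∧ A.ncard = n}
  have hSne : S.Nonempty := by
    refine ⟨(vertElems V ∪ edgeElems G).ncard, vertElems V ∪ edgeElems G,
      subset_rfl, ?_, rfl⟩
    intro w hw hw'; exact absurd hw hw'
  obtain ⟨A, hAU, hAdom, hAcard⟩ := Nat.sInf_mem hSne
  -- the replacement map
  let f : V ⊕ Sym2 V → V ⊕ Sym2 V := fun x =>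
    match x with
    | .inl v => .inr s(v, (hnbr v).choose)
    | .inr e => .inr e
  have hfU : ∀ x ∈ A, f x ∈ edgeElems G := by
    intro x hx
    cases x with
    | inl v => exact ⟨s(v, (hnbr v).choose), (hnbr v).choose_spec, rfl⟩
    | inr e =>
      rcases hAU hx with h | h
      · obtain ⟨u, hu⟩ := h; simp at hu
      · obtain ⟨e2, he2, heq⟩ := h
        obtain rfl := Sum.inr_injective heq
        exact ⟨e2, he2, rfl⟩
  have hBdom : Dominates G (f '' A) (edgeElems G) := by
    rintro w ⟨e, he, rfl⟩ hwB
    have hwA : (Sum.inr e : V ⊕ Sym2 V) ∉ A := by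
      intro h
      exact hwB ⟨_, h, rfl⟩
    obtain ⟨a, haA, hassoc⟩ := hAdom _ (Or.inr ⟨e, he, rfl⟩) hwA
    cases a with
    | inr g => exact ⟨.inr g, ⟨_, haA, rfl⟩, hassoc⟩
    | inl v =>
      refine ⟨f (.inl v), ⟨_, haA, rfl⟩, ?_⟩
      have hve : v ∈ e := hassoc
      refine ⟨?_, v, Sym2.mem_iff.mpr (Or.inl rfl), hve⟩
      intro heq
      apply hwB
      exact ⟨.inl v, haA, by simp [f, heq]⟩
  have hmem : (f '' A).ncard ∈ {n | ∃ B ⊆ edgeElems G,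
      Dominates G B (edgeElems G) ∧ B.ncard = n} := ⟨f '' A, by
        rintro x ⟨a, ha, rfl⟩; exact hfU a ha, hBdom, rfl⟩
  calc gammaUW G (edgeElems G) (edgeElems G) ≤ (f '' A).ncard := Nat.sInf_le hmem
    _ ≤ A.ncard := Set.ncard_image_le A.toFinite
    _ = gammaUW G _ _ := hAcard
end

section
/- For the ridged graph R_{3n} (n ≥ 1): γ(R_{3n}) = n and γ'(R_{3n}) = ⌈n/2⌉. -/
/-- The ridged graph `R_{3n}`.  The vertex `(i, 0)` is `u_{i+1}`, `(i, 1)` is `v_{i+1}`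
and `(i, 2)` is `w_{i+1}`.  The `u_i` form a path and each `u_i` has the two pendant
neighbours `v_i`, `w_i`. -/
def ridgedRel (n : ℕ) : Fin n × Fin 3 → Fin n × Fin 3 → Prop
  | (i, c), (j, d) =>
      (c = 0 ∧ d = 0 ∧ (j : ℕ) = (i : ℕ) + 1) ∨ (c = 0 ∧ i = j ∧ (d = 1 ∨ d = 2))

def ridgedGraph (n : ℕ) : SimpleGraph (Fin n × Fin 3) where
  Adj x y := x ≠ y ∧ (ridgedRel n x y ∨ ridgedRel n y x)
  symm := ⟨fun _ _ ⟨h1, h2⟩ => ⟨h1.symm, h2.symm⟩⟩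
  loopless := ⟨fun _ ⟨h1, _⟩ => h1 rfl⟩

/-!
A vertex `v_i` is a leaf hanging off `u_i`, so every dominating vertex set contains `u_i` or
`v_i`, giving `γ ≥ n`, while the spine `{u_i}` dominates. Likewise the pendant edge `u_i v_i`
is only associated with edges through `u_i`, so a dominating edge set covers every spine
vertex; an edge covers at most two of them, giving `γ' ≥ ⌈n/2⌉`. Conversely, the edges
`u_1 u_2, u_3 u_4, …` (ending with the pendant edge `u_n v_n` when `n` is odd) cover the spine,
and every edge of `R_{3n}` meets the spine, so they dominate all edges.
-/

section Domination

variable {V : Type*} {G : SimpleGraph V}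

theorem gammaUW_eq_of_forall_le {U W : Set (V ⊕ Sym2 V)} {m : ℕ}
    (hex : ∃ A ⊆ U, Dominates G A W ∧ A.ncard = m)
    (hle : ∀ A ⊆ U, Dominates G A W → m ≤ A.ncard) : gammaUW G U W = m :=
  IsLeast.csInf_eq ⟨hex, fun _ ⟨A, hAU, hdom, hA⟩ => hA ▸ hle A hAU hdom⟩

theorem Dominates.inl_mem_or_inl_mem_of_leaf {A : Set (V ⊕ Sym2 V)} (hA : A ⊆ vertElems V)
    (hdom : Dominates G A (vertElems V)) {u v : V} (hleaf : ∀ x, G.Adj x v → x = u) :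
    Sum.inl v ∈ A ∨ Sum.inl u ∈ A := by
  refine or_iff_not_imp_left.mpr fun hv => ?_
  obtain ⟨a, ha, hav⟩ := hdom _ ⟨v, rfl⟩ hv
  obtain ⟨x, rfl⟩ := hA ha
  exact hleaf x hav ▸ ha

theorem SimpleGraph.eq_of_mem_edgeSet_of_leaf {u v : V} (hleaf : ∀ x, G.Adj x v → x = u)
    {e : Sym2 V} (he : e ∈ G.edgeSet) (hv : v ∈ e) : e = s(u, v) := by
  obtain ⟨y, rfl⟩ := Sym2.mem_iff_exists.mp hv
  rw [hleaf y (G.mem_edgeSet.mp he).symm]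
  exact Sym2.eq_swap

theorem Dominates.exists_inr_mem_of_leaf {B : Set (V ⊕ Sym2 V)} (hB : B ⊆ edgeElems G)
    (hdom : Dominates G B (edgeElems G)) {u v : V} (huv : G.Adj u v)
    (hleaf : ∀ x, G.Adj x v → x = u) : ∃ e, Sum.inr e ∈ B ∧ u ∈ e := by
  by_cases huvB : Sum.inr s(u, v) ∈ B
  · exact ⟨_, huvB, Sym2.mem_mk_left u v⟩
  obtain ⟨a, ha, hassoc⟩ := hdom _ ⟨_, huv, rfl⟩ huvB
  obtain ⟨f, hf, rfl⟩ := hB ha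
  obtain ⟨hne, x, hxf, hx⟩ := hassoc
  rcases Sym2.mem_iff.mp hx with rfl | rfl
  · exact ⟨f, ha, hxf⟩
  · exact absurd (G.eq_of_mem_edgeSet_of_leaf hleaf hf hxf) hne

theorem dominates_edgeElems_of_cover {S : Set V} {B : Set (Sym2 V)}
    (hS : ∀ e ∈ G.edgeSet, ∃ x ∈ S, x ∈ e) (hB : ∀ x ∈ S, ∃ f ∈ B, x ∈ f) :
    Dominates G (Sum.inr '' B) (edgeElems G) := by
  rintro _ ⟨e, he, rfl⟩ heB
  obtain ⟨x, hxS, hxe⟩ := hS e he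
  obtain ⟨f, hfB, hxf⟩ := hB x hxS
  refine ⟨_, ⟨f, hfB, rfl⟩, ?_, x, hxf, hxe⟩
  rintro rfl
  exact heB ⟨f, hfB, rfl⟩

end Domination

theorem ncard_le_two_mul_ncard_of_forall_exists_mem {α : Type*} {S : Set α} {B : Set (Sym2 α)}
    (hB : B.Finite) (hcover : ∀ x ∈ S, ∃ e ∈ B, x ∈ e) : S.ncard ≤ 2 * B.ncard := by
  classical
  have hsub : S ⊆ ↑(hB.toFinset.biUnion Sym2.toFinset) := fun x hx => by
    obtain ⟨e, he, hxe⟩ := hcover x hx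
    simpa using ⟨e, he, hxe⟩
  calc S.ncard ≤ (hB.toFinset.biUnion Sym2.toFinset).card := by
        rw [← Set.ncard_coe_finset]; exact Set.ncard_le_ncard hsub
    _ ≤ ∑ e ∈ hB.toFinset, e.toFinset.card := Finset.card_biUnion_le
    _ ≤ ∑ _e ∈ hB.toFinset, 2 := Finset.sum_le_sum fun e _ => by
        rw [Sym2.card_toFinset]; split_ifs <;> omega
    _ = 2 * B.ncard := by
        rw [Finset.sum_const, smul_eq_mul, mul_comm, Set.ncard_eq_toFinset_card B hB]

section RidgedGraph

variable {n : ℕ}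

theorem ridgedGraph_adj_of_ne_zero (i : Fin n) {c : Fin 3} (hc : c ≠ 0) :
    (ridgedGraph n).Adj (i, 0) (i, c) :=
  ⟨by simpa [Prod.ext_iff] using hc.symm, Or.inl (Or.inr ⟨rfl, rfl, by omega⟩)⟩

theorem ridgedGraph_eq_of_adj_of_ne_zero {x : Fin n × Fin 3} {i : Fin n} {c : Fin 3}
    (hc : c ≠ 0) (h : (ridgedGraph n).Adj x (i, c)) : x = (i, 0) := by
  obtain ⟨j, d⟩ := x
  obtain ⟨-, (⟨-, hc0, -⟩ | ⟨rfl, rfl, -⟩) | (⟨hc0, -⟩ | ⟨hc0, -⟩)⟩ := h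
  all_goals first | rfl | exact absurd hc0 hc

theorem ridgedGraph_exists_spine_mem {e : Sym2 (Fin n × Fin 3)}
    (he : e ∈ (ridgedGraph n).edgeSet) : ∃ i : Fin n, (i, 0) ∈ e := by
  induction e using Sym2.ind with | _ x y =>
  obtain ⟨i, c⟩ := x
  obtain ⟨j, d⟩ := y
  obtain ⟨-, (⟨-, rfl, -⟩ | ⟨rfl, -⟩) | (⟨-, rfl, -⟩ | ⟨rfl, -⟩)⟩ := he
  all_goals first | exact ⟨i, Sym2.mem_mk_left _ _⟩ | exact ⟨j, Sym2.mem_mk_right _ _⟩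

def ridgedPairEdge (n : ℕ) (k : Fin ((n + 1) / 2)) : Sym2 (Fin n × Fin 3) :=
  if h : 2 * (k : ℕ) + 1 < n then s((⟨2 * k, by omega⟩, 0), (⟨2 * k + 1, h⟩, 0))
  else s((⟨2 * k, by omega⟩, 0), (⟨2 * k, by omega⟩, 1))

theorem ridgedPairEdge_mem_edgeSet (k : Fin ((n + 1) / 2)) :
    ridgedPairEdge n k ∈ (ridgedGraph n).edgeSet := by
  unfold ridgedPairEdge
  split
  · exact ⟨by simp [Fin.ext_iff], Or.inl (Or.inl ⟨rfl, rfl, rfl⟩)⟩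
  · exact ridgedGraph_adj_of_ne_zero _ one_ne_zero

theorem fst_div_two_of_mem_ridgedPairEdge {k : Fin ((n + 1) / 2)} {x : Fin n × Fin 3}
    (hx : x ∈ ridgedPairEdge n k) : (x.1 : ℕ) / 2 = k := by
  unfold ridgedPairEdge at hx
  split at hx <;> rcases Sym2.mem_iff.mp hx with rfl | rfl <;> dsimp only <;> omega

theorem spine_mem_ridgedPairEdge (i : Fin n) :
    (i, 0) ∈ ridgedPairEdge n ⟨i / 2, by omega⟩ := by
  unfold ridgedPairEdge
  split_ifs with h <;> dsimp only at h <;> simp [Fin.ext_iff] <;> omega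

theorem ridgedPairEdge_injective : Function.Injective (ridgedPairEdge n) := fun k _ h =>
  have hx := Sym2.out_fst_mem (ridgedPairEdge n k)
  Fin.ext <| (fst_div_two_of_mem_ridgedPairEdge hx).symm.trans
    (fst_div_two_of_mem_ridgedPairEdge (h ▸ hx))

theorem ridgedGraph_gammaUW_vertElems :
    gammaUW (ridgedGraph n) (vertElems (Fin n × Fin 3)) (vertElems (Fin n × Fin 3)) = n := by
  apply gammaUW_eq_of_forall_le
  · refine ⟨Set.range fun i : Fin n => Sum.inl (i, 0), ?_, ?_, ?_⟩
    · rintro _ ⟨i, rfl⟩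
      exact ⟨_, rfl⟩
    · rintro _ ⟨⟨i, c⟩, rfl⟩ hnot
      have hc : c ≠ 0 := by
        rintro rfl
        exact hnot ⟨i, rfl⟩
      exact ⟨_, ⟨i, rfl⟩, ridgedGraph_adj_of_ne_zero i hc⟩
    · rw [Set.ncard_range_of_injective fun i j h => by simpa using h, Nat.card_fin]
  · intro A hA hdom
    have hmeet (i : Fin n) : ∃ c, Sum.inl (i, c) ∈ A :=
      (hdom.inl_mem_or_inl_mem_of_leaf hA fun _ => ridgedGraph_eq_of_adj_of_ne_zero
        one_ne_zero).elim (⟨1, ·⟩) (⟨0, ·⟩)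
    choose c hc using hmeet
    simpa using Set.ncard_le_ncard_of_injOn (s := Set.univ) (fun i => Sum.inl (i, c i))
      (fun i _ => hc i) fun _ _ _ _ h => (Prod.ext_iff.mp (Sum.inl_injective h)).1

theorem ridgedGraph_gammaUW_edgeElems :
    gammaUW (ridgedGraph n) (edgeElems (ridgedGraph n)) (edgeElems (ridgedGraph n))
      = (n + 1) / 2 := by
  set spine := Set.range fun i : Fin n => ((i, 0) : Fin n × Fin 3)
  apply gammaUW_eq_of_forall_le
  · refine ⟨Sum.inr '' Set.range (ridgedPairEdge n), ?_, ?_, ?_⟩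
    · exact Set.image_mono (Set.range_subset_iff.mpr ridgedPairEdge_mem_edgeSet)
    · refine dominates_edgeElems_of_cover (S := spine) ?_ ?_
      · intro e he
        obtain ⟨i, hi⟩ := ridgedGraph_exists_spine_mem he
        exact ⟨_, ⟨i, rfl⟩, hi⟩
      · rintro _ ⟨i, rfl⟩
        exact ⟨_, ⟨_, rfl⟩, spine_mem_ridgedPairEdge i⟩
    · rw [Set.ncard_image_of_injective _ Sum.inr_injective,
        Set.ncard_range_of_injective ridgedPairEdge_injective, Nat.card_fin]
  · intro B hB hdom
    have hcover : ∀ x ∈ spine, ∃ e ∈ Sum.inr ⁻¹' B, x ∈ e := by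
      rintro _ ⟨i, rfl⟩
      exact hdom.exists_inr_mem_of_leaf hB (ridgedGraph_adj_of_ne_zero i one_ne_zero)
        fun _ => ridgedGraph_eq_of_adj_of_ne_zero one_ne_zero
    have hcount := ncard_le_two_mul_ncard_of_forall_exists_mem (Set.toFinite _) hcover
    have hspine_inj : Function.Injective fun i : Fin n => ((i, 0) : Fin n × Fin 3) :=
      fun i j h => by simpa using h
    rw [Set.ncard_range_of_injective hspine_inj, Nat.card_fin,
      Set.ncard_preimage_of_injective_subset_range Sum.inr_injective
        (hB.trans (Set.image_subset_range _ _))] at hcount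
    omega

end RidgedGraph

theorem stmt14_general (n : ℕ) :
    gammaUW (ridgedGraph n) (vertElems (Fin n × Fin 3)) (vertElems (Fin n × Fin 3)) = n ∧
    gammaUW (ridgedGraph n) (edgeElems (ridgedGraph n)) (edgeElems (ridgedGraph n))
      = (n + 1) / 2 :=
  ⟨ridgedGraph_gammaUW_vertElems, ridgedGraph_gammaUW_edgeElems⟩

theorem stmt14 (n : ℕ) (hn : 1 ≤ n) :
    gammaUW (ridgedGraph n) (vertElems (Fin n × Fin 3)) (vertElems (Fin n × Fin 3)) = n ∧
    gammaUW (ridgedGraph n) (edgeElems (ridgedGraph n)) (edgeElems (ridgedGraph n))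
      = (n + 1) / 2 :=
  stmt14_general n
end

section
/- For every nontrivial connected simple graph G, γ_{V,E}(G) ≥ γ_{E,V}(G) does not hold in general nor does the reverse; however the following chain holds: γ_{V,E}(G) = γ_{V,V∪E}(G) ≥ max(γ''(G), γ(G), γ'(G)) and γ_{E,V}(G) = γ_{E,V∪E}(G) ≥ max(γ''(G), γ(G), γ'(G)). -/
/-!
A vertex set dominating all edges is a vertex cover. As no vertex is isolated, a vertex outside
it has a neighbour, and the edge between them is covered from inside, so the set dominates all
elements; trading each of its vertices for an edge at that vertex gives an edge dominating set
that is no larger. Dually, an edge set dominating all vertices is an edge cover, so it meets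
every edge, and one end of each of its edges gives a dominating vertex set.

Neither order holds in general: in `K₄` two disjoint edges cover all vertices while a vertex
cover misses at most one vertex, and in the path on three vertices the middle vertex covers both
edges while no single edge covers all three vertices.
-/

open SimpleGraph

section

variable {V : Type*} {G : SimpleGraph V} {A U U' W W' : Set (V ⊕ Sym2 V)}

theorem Dominates.mono_right (hW : W' ⊆ W) (hd : Dominates G A W) : Dominates G A W' :=
  fun w hw hwA => hd w (hW hw) hwA

theorem Dominates.union (hd : Dominates G A W) (hd' : Dominates G A W') :
    Dominates G A (W ∪ W') := by
  rintro w (hw | hw) hwA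
  exacts [hd w hw hwA, hd' w hw hwA]

theorem gammaUW_le_ncard (hA : A ⊆ U) (hd : Dominates G A W) : gammaUW G U W ≤ A.ncard :=
  Nat.sInf_le ⟨A, hA, hd, rfl⟩

theorem le_gammaUW {m : ℕ} (hne : ∃ A ⊆ U, Dominates G A W)
    (h : ∀ A ⊆ U, Dominates G A W → m ≤ A.ncard) : m ≤ gammaUW G U W := by
  obtain ⟨A, hA, hd⟩ := hne
  obtain ⟨B, hB, hdB, hcard⟩ : gammaUW G U W ∈ {n | ∃ A ⊆ U, Dominates G A W ∧ A.ncard = n} :=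
    Nat.sInf_mem ⟨_, A, hA, hd, rfl⟩
  exact hcard ▸ h B hB hdB

theorem gammaUW_le_gammaUW (hne : ∃ A ⊆ U, Dominates G A W)
    (h : ∀ A ⊆ U, Dominates G A W → ∃ B ⊆ U', Dominates G B W' ∧ B.ncard ≤ A.ncard) :
    gammaUW G U' W' ≤ gammaUW G U W :=
  le_gammaUW hne fun A hA hd => by
    obtain ⟨B, hB, hdB, hcard⟩ := h A hA hd
    exact (gammaUW_le_ncard hB hdB).trans hcard

theorem gammaUW_le_gammaUW_of_imp (hne : ∃ A ⊆ U, Dominates G A W)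
    (h : ∀ A ⊆ U, Dominates G A W → A ⊆ U' ∧ Dominates G A W') :
    gammaUW G U' W' ≤ gammaUW G U W :=
  gammaUW_le_gammaUW hne fun A hA hd => ⟨A, (h A hA hd).1, (h A hA hd).2, le_rfl⟩

theorem gammaUW_congr_right (h : ∀ A ⊆ U, (Dominates G A W ↔ Dominates G A W')) :
    gammaUW G U W = gammaUW G U W' :=
  congrArg sInf <| Set.ext fun _ =>
    exists_congr fun A => and_congr_right fun hA => and_congr_left' (h A hA)

theorem inr_notMem_of_subset_vertElems (hA : A ⊆ vertElems V) (e : Sym2 V) :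
    (Sum.inr e : V ⊕ Sym2 V) ∉ A := fun he => by
  obtain ⟨v, hv⟩ := hA he
  exact Sum.inl_ne_inr hv

theorem inl_notMem_of_subset_edgeElems (hA : A ⊆ edgeElems G) (v : V) :
    (Sum.inl v : V ⊕ Sym2 V) ∉ A := fun hv => by
  obtain ⟨e, -, he⟩ := hA hv
  exact Sum.inr_ne_inl he

theorem Dominates.inl_mem_or_inl_mem (hA : A ⊆ vertElems V) (hd : Dominates G A (edgeElems G))
    {u v : V} (huv : G.Adj u v) : Sum.inl u ∈ A ∨ Sum.inl v ∈ A := by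
  obtain ⟨a, ha, hae⟩ := hd _ ⟨_, huv, rfl⟩ (inr_notMem_of_subset_vertElems hA s(u, v))
  obtain ⟨x, rfl⟩ := hA ha
  rcases Sym2.mem_iff.mp (show x ∈ s(u, v) from hae) with rfl | rfl
  exacts [Or.inl ha, Or.inr ha]

theorem Dominates.exists_inr_mem (hA : A ⊆ edgeElems G) (hd : Dominates G A (vertElems V))
    (v : V) : ∃ e ∈ G.edgeSet, Sum.inr e ∈ A ∧ v ∈ e := by
  obtain ⟨a, ha, hav⟩ := hd _ ⟨v, rfl⟩ (inl_notMem_of_subset_edgeElems hA v)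
  obtain ⟨e, he, rfl⟩ := hA ha
  exact ⟨e, he, ha, hav⟩

theorem vertElems_dominates_edgeElems : Dominates G (vertElems V) (edgeElems G) := by
  rintro _ ⟨e, -, rfl⟩ -
  exact ⟨Sum.inl e.out.1, ⟨_, rfl⟩, Sym2.out_fst_mem e⟩

theorem edgeElems_dominates_vertElems (hG : ∀ v, ∃ u, G.Adj v u) :
    Dominates G (edgeElems G) (vertElems V) := by
  rintro _ ⟨v, rfl⟩ -
  obtain ⟨u, hvu⟩ := hG v
  exact ⟨Sum.inr s(v, u), ⟨_, hvu, rfl⟩, Sym2.mem_mk_left v u⟩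

theorem Dominates.vertElems_of_edgeElems (hG : ∀ v, ∃ u, G.Adj v u) (hA : A ⊆ vertElems V)
    (hd : Dominates G A (edgeElems G)) : Dominates G A (vertElems V) := by
  rintro _ ⟨v, rfl⟩ hv
  obtain ⟨u, hvu⟩ := hG v
  exact ⟨Sum.inl u, (hd.inl_mem_or_inl_mem hA hvu).resolve_left hv, hvu.symm⟩

theorem Dominates.edgeElems_of_vertElems (hA : A ⊆ edgeElems G)
    (hd : Dominates G A (vertElems V)) : Dominates G A (edgeElems G) := by
  rintro _ ⟨e, -, rfl⟩ he
  obtain ⟨f, -, hf, hf₁⟩ := hd.exists_inr_mem hA e.out.1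
  refine ⟨Sum.inr f, hf, ?_, e.out.1, hf₁, Sym2.out_fst_mem e⟩
  rintro rfl
  exact he hf

theorem Dominates.exists_edgeElems_ncard_le [Finite V] (hG : ∀ v, ∃ u, G.Adj v u)
    (hA : A ⊆ vertElems V) (hd : Dominates G A (edgeElems G)) :
    ∃ B ⊆ edgeElems G, Dominates G B (edgeElems G) ∧ B.ncard ≤ A.ncard := by
  choose nbr hnbr using hG
  let f : V ⊕ Sym2 V → V ⊕ Sym2 V := Sum.elim (fun v => Sum.inr s(v, nbr v)) Sum.inr
  refine ⟨f '' A, ?_, ?_, Set.ncard_image_le A.toFinite⟩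
  · rintro _ ⟨a, ha, rfl⟩
    obtain ⟨v, rfl⟩ := hA ha
    exact ⟨_, hnbr v, rfl⟩
  · rintro _ ⟨e, he, rfl⟩ heB
    obtain ⟨a, ha, hae⟩ := hd _ ⟨e, he, rfl⟩ (inr_notMem_of_subset_vertElems hA e)
    obtain ⟨v, rfl⟩ := hA ha
    refine ⟨f (Sum.inl v), ⟨_, ha, rfl⟩, ?_, v, Sym2.mem_mk_left v _, hae⟩
    rintro rfl
    exact heB ⟨_, ha, rfl⟩

theorem Dominates.exists_vertElems_ncard_le [Finite V] (hA : A ⊆ edgeElems G)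
    (hd : Dominates G A (vertElems V)) :
    ∃ B ⊆ vertElems V, Dominates G B (vertElems V) ∧ B.ncard ≤ A.ncard := by
  let f : V ⊕ Sym2 V → V ⊕ Sym2 V := Sum.elim Sum.inl fun e => Sum.inl e.out.1
  refine ⟨f '' A, ?_, ?_, Set.ncard_image_le A.toFinite⟩
  · rintro _ ⟨a | e, -, rfl⟩ <;> exact ⟨_, rfl⟩
  · rintro _ ⟨v, rfl⟩ hvB
    obtain ⟨e, he, heA, hve⟩ := hd.exists_inr_mem hA v
    have hne : e.out.1 ≠ v := by
      rintro rfl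
      exact hvB ⟨_, heA, rfl⟩
    have he_eq : e = s(e.out.1, v) := (Sym2.mem_and_mem_iff hne).mp ⟨Sym2.out_fst_mem e, hve⟩
    refine ⟨f (Sum.inr e), ⟨_, heA, rfl⟩, ?_⟩
    exact G.mem_edgeSet.mp (he_eq ▸ he)

theorem gammaUW_vertElems_edgeElems_eq (hG : ∀ v, ∃ u, G.Adj v u) :
    gammaUW G (vertElems V) (edgeElems G) =
      gammaUW G (vertElems V) (vertElems V ∪ edgeElems G) :=
  gammaUW_congr_right fun _ hA =>
    ⟨fun hd => (hd.vertElems_of_edgeElems hG hA).union hd,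
      fun hd => hd.mono_right Set.subset_union_right⟩

theorem gammaUW_edgeElems_vertElems_eq :
    gammaUW G (edgeElems G) (vertElems V) =
      gammaUW G (edgeElems G) (vertElems V ∪ edgeElems G) :=
  gammaUW_congr_right fun _ hA =>
    ⟨fun hd => hd.union (hd.edgeElems_of_vertElems hA),
      fun hd => hd.mono_right Set.subset_union_left⟩

theorem max_le_gammaUW_vertElems_edgeElems [Finite V] (hG : ∀ v, ∃ u, G.Adj v u) :
    max (gammaUW G (vertElems V ∪ edgeElems G) (vertElems V ∪ edgeElems G))
        (max (gammaUW G (vertElems V) (vertElems V)) (gammaUW G (edgeElems G) (edgeElems G))) ≤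
      gammaUW G (vertElems V) (edgeElems G) := by
  have hne : ∃ A ⊆ vertElems V, Dominates G A (edgeElems G) :=
    ⟨_, subset_rfl, vertElems_dominates_edgeElems⟩
  refine max_le ?_ (max_le ?_ ?_)
  · exact gammaUW_le_gammaUW_of_imp hne fun A hA hd =>
      ⟨hA.trans Set.subset_union_left, (hd.vertElems_of_edgeElems hG hA).union hd⟩
  · exact gammaUW_le_gammaUW_of_imp hne fun A hA hd => ⟨hA, hd.vertElems_of_edgeElems hG hA⟩
  · exact gammaUW_le_gammaUW hne fun A hA hd => hd.exists_edgeElems_ncard_le hG hA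

theorem max_le_gammaUW_edgeElems_vertElems [Finite V] (hG : ∀ v, ∃ u, G.Adj v u) :
    max (gammaUW G (vertElems V ∪ edgeElems G) (vertElems V ∪ edgeElems G))
        (max (gammaUW G (vertElems V) (vertElems V)) (gammaUW G (edgeElems G) (edgeElems G))) ≤
      gammaUW G (edgeElems G) (vertElems V) := by
  have hne : ∃ A ⊆ edgeElems G, Dominates G A (vertElems V) :=
    ⟨_, subset_rfl, edgeElems_dominates_vertElems hG⟩
  refine max_le ?_ (max_le ?_ ?_)
  · exact gammaUW_le_gammaUW_of_imp hne fun A hA hd =>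
      ⟨hA.trans Set.subset_union_right, hd.union (hd.edgeElems_of_vertElems hA)⟩
  · exact gammaUW_le_gammaUW hne fun A hA hd => hd.exists_vertElems_ncard_le hA
  · exact gammaUW_le_gammaUW_of_imp hne fun A hA hd => ⟨hA, hd.edgeElems_of_vertElems hA⟩

theorem card_sub_one_le_gammaUW_top [Finite V] :
    Nat.card V - 1 ≤ gammaUW (⊤ : SimpleGraph V) (vertElems V) (edgeElems ⊤) := by
  refine le_gammaUW ⟨_, subset_rfl, vertElems_dominates_edgeElems⟩ fun A hA hd => ?_
  set S : Set V := Sum.inl ⁻¹' A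
  have hSc : Sᶜ.ncard ≤ 1 := Set.ncard_le_one_iff_subsingleton.mpr fun u hu v hv => by
    by_contra huv
    exact (hd.inl_mem_or_inl_mem hA ((top_adj u v).mpr huv)).elim hu hv
  have hS := Set.ncard_add_ncard_compl S
  rw [← Set.image_preimage_eq_of_subset hA, Set.ncard_image_of_injective S Sum.inl_injective]
  omega

theorem two_le_gammaUW_edgeElems_vertElems [Finite V] (hG : ∀ v, ∃ u, G.Adj v u) {x y z : V}
    (hxy : x ≠ y) (hxz : x ≠ z) (hyz : y ≠ z) :
    2 ≤ gammaUW G (edgeElems G) (vertElems V) := by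
  refine le_gammaUW ⟨_, subset_rfl, edgeElems_dominates_vertElems hG⟩ fun A hA hd => ?_
  by_contra! hA₁
  have hsub : A.Subsingleton := Set.ncard_le_one_iff_subsingleton.mp (by omega)
  obtain ⟨e, -, he, hxe⟩ := hd.exists_inr_mem hA x
  obtain ⟨f, -, hf, hyf⟩ := hd.exists_inr_mem hA y
  obtain ⟨g, -, hg, hzg⟩ := hd.exists_inr_mem hA z
  cases Sum.inr_injective (hsub he hf)
  cases Sum.inr_injective (hsub he hg)
  rw [(Sym2.mem_and_mem_iff hxy).mp ⟨hxe, hyf⟩, Sym2.mem_iff] at hzg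
  exact hzg.elim (fun h => hxz h.symm) fun h => hyz h.symm

theorem gammaUW_top_fin_four_edgeElems_vertElems_le :
    gammaUW (⊤ : SimpleGraph (Fin 4)) (edgeElems ⊤) (vertElems (Fin 4)) ≤ 2 := by
  let A : Set (Fin 4 ⊕ Sym2 (Fin 4)) := {Sum.inr s(0, 1), Sum.inr s(2, 3)}
  have hA : A ⊆ edgeElems ⊤ := by
    rintro _ (rfl | rfl) <;> exact ⟨_, by decide, rfl⟩
  have hd : Dominates ⊤ A (vertElems (Fin 4)) := by
    rintro _ ⟨v, rfl⟩ -
    fin_cases v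
    exacts [⟨_, .inl rfl, Sym2.mem_mk_left _ _⟩, ⟨_, .inl rfl, Sym2.mem_mk_right _ _⟩,
      ⟨_, .inr rfl, Sym2.mem_mk_left _ _⟩, ⟨_, .inr rfl, Sym2.mem_mk_right _ _⟩]
  calc gammaUW ⊤ (edgeElems ⊤) (vertElems (Fin 4)) ≤ A.ncard := gammaUW_le_ncard hA hd
    _ = 2 := Set.ncard_pair (by decide)

theorem gammaUW_pathGraph_three_vertElems_edgeElems_le :
    gammaUW (pathGraph 3) (vertElems (Fin 3)) (edgeElems (pathGraph 3)) ≤ 1 := by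
  have hA : {Sum.inl 1} ⊆ vertElems (Fin 3) := Set.singleton_subset_iff.mpr ⟨1, rfl⟩
  have hd : Dominates (pathGraph 3) {Sum.inl 1} (edgeElems (pathGraph 3)) := by
    rintro _ ⟨e, he, rfl⟩ -
    refine ⟨_, rfl, ?_⟩
    induction e using Sym2.ind with | _ a b => ?_
    rw [mem_edgeSet, pathGraph_adj] at he
    show (1 : Fin 3) ∈ s(a, b)
    fin_cases a <;> fin_cases b <;> simp_all
  exact (Set.ncard_singleton _) ▸ gammaUW_le_ncard hA hd

end

theorem stmt19 :
    (∃ (k : ℕ) (G₁ : SimpleGraph (Fin k)), G₁.Connected ∧ Nontrivial (Fin k) ∧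
      gammaUW G₁ (vertElems (Fin k)) (edgeElems G₁)
        > gammaUW G₁ (edgeElems G₁) (vertElems (Fin k))) ∧
    (∃ (k : ℕ) (G₂ : SimpleGraph (Fin k)), G₂.Connected ∧ Nontrivial (Fin k) ∧
      gammaUW G₂ (edgeElems G₂) (vertElems (Fin k))
        > gammaUW G₂ (vertElems (Fin k)) (edgeElems G₂)) ∧
    (∀ (V : Type*) [Fintype V] (G : SimpleGraph V), G.Connected → Nontrivial V →
      (gammaUW G (vertElems V) (edgeElems G)
          = gammaUW G (vertElems V) (vertElems V ∪ edgeElems G) ∧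
        gammaUW G (vertElems V) (edgeElems G) ≥
          max (gammaUW G (vertElems V ∪ edgeElems G) (vertElems V ∪ edgeElems G))
            (max (gammaUW G (vertElems V) (vertElems V))
              (gammaUW G (edgeElems G) (edgeElems G)))) ∧
      (gammaUW G (edgeElems G) (vertElems V)
          = gammaUW G (edgeElems G) (vertElems V ∪ edgeElems G) ∧
        gammaUW G (edgeElems G) (vertElems V) ≥
          max (gammaUW G (vertElems V ∪ edgeElems G) (vertElems V ∪ edgeElems G))
            (max (gammaUW G (vertElems V) (vertElems V))
              (gammaUW G (edgeElems G) (edgeElems G))))) := by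
  refine ⟨⟨4, ⊤, connected_top, inferInstance, ?_⟩,
    ⟨3, pathGraph 3, pathGraph_connected 2, inferInstance, ?_⟩, fun V _ G hG _ => ?_⟩
  · calc gammaUW ⊤ (edgeElems ⊤) (vertElems (Fin 4)) ≤ 2 :=
          gammaUW_top_fin_four_edgeElems_vertElems_le
      _ < Nat.card (Fin 4) - 1 := by simp
      _ ≤ gammaUW ⊤ (vertElems (Fin 4)) (edgeElems ⊤) := card_sub_one_le_gammaUW_top
  · have hP := (pathGraph_connected 2).preconnected.exists_adj_of_nontrivial
    exact gammaUW_pathGraph_three_vertElems_edgeElems_le.trans_lt <|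
      two_le_gammaUW_edgeElems_vertElems (x := 0) (y := 1) (z := 2) hP
        (by decide) (by decide) (by decide)
  · have hG' := hG.preconnected.exists_adj_of_nontrivial
    exact ⟨⟨gammaUW_vertElems_edgeElems_eq hG', max_le_gammaUW_vertElems_edgeElems hG'⟩,
      ⟨gammaUW_edgeElems_vertElems_eq, max_le_gammaUW_edgeElems_vertElems hG'⟩⟩
end
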